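/- For a region-based test with nonempty region S, combining GFBST-style modalities with posterior-probability modalities under the hypotheses ev-acceptance ⇒ P(H|x) ≥ 1−c and cutoffs c₁=1−c, c₂=c with c<0.5, one obtains the chain of implications: GFBST accepts H ⇒ cutoff test accepts H ⇒ cutoff test does not reject H ⇒ GFBST does not reject H. -/

import Mathlib

open MeasureTheory

def tangentSet {Θ : Type*} (s : Θ → ℝ) (H : Set Θ) : Set Θ :=
  {θ₁ | ∀ θ₀ ∈ H, s θ₁ > s θ₀}

noncomputable def ev {Θ : Type*} [MeasurableSpace Θ] (P : Measure Θ) (s : Θ → ℝ)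
    (H : Set Θ) : ENNReal :=
  1 - P (tangentSet s H)

/-! The tangent set of `H` lies outside `H`, and that of `Hᶜ` inside `H`. Hence evidence against
`Hᶜ` is mass of `H`, while `ev P s H` is at least `P H`, since its defect `P (tangentSet s H)` is
at most `P Hᶜ = 1 - P H`. The middle implication is `c < 1/2 ≤ 1 - c`. -/

section

variable {Θ : Type*} (s : Θ → ℝ) (H : Set Θ)

theorem tangentSet_subset_compl : tangentSet s H ⊆ Hᶜ :=
  fun θ hθ hθH => lt_irrefl (s θ) (hθ θ hθH)

theorem tangentSet_compl_subset : tangentSet s Hᶜ ⊆ H := by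
  simpa only [compl_compl] using tangentSet_subset_compl s Hᶜ

variable [MeasurableSpace Θ] (P : Measure Θ)

theorem one_sub_le_measure_of_ev_compl_le {c : ENNReal} (hev : ev P s Hᶜ ≤ c) :
    1 - c ≤ P H :=
  calc 1 - c ≤ P (tangentSet s Hᶜ) := tsub_le_iff_tsub_le.mp hev
    _ ≤ P H := measure_mono (tangentSet_compl_subset s H)

theorem measure_le_ev [IsProbabilityMeasure P] (hH : MeasurableSet H) : P H ≤ ev P s H :=
  calc P H = 1 - P Hᶜ := by
        rw [prob_compl_eq_one_sub hH, ENNReal.sub_sub_cancel ENNReal.one_ne_top prob_le_one]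
    _ ≤ 1 - P (tangentSet s H) := tsub_le_tsub_left (measure_mono (tangentSet_subset_compl s H)) 1

end

theorem ENNReal.lt_one_sub_self_of_lt_half {c : ENNReal} (hc : c < 1 / 2) : c < 1 - c :=
  calc c < 2⁻¹ := by rwa [← one_div]
    _ = 1 - 2⁻¹ := ENNReal.one_sub_inv_two.symm
    _ ≤ 1 - c := tsub_le_tsub_left (by rw [← one_div]; exact hc.le) 1

theorem stmt_18_general {Θ : Type*} [MeasurableSpace Θ] (P : Measure Θ) [IsProbabilityMeasure P]
    (s : Θ → ℝ) (c : ENNReal) (hc : c < 1/2)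
    (H : Set Θ) (hH : MeasurableSet H) :
    (ev P s Hᶜ ≤ c → P H ≥ 1 - c) ∧
    (P H ≥ 1 - c → P H > c) ∧
    (P H > c → ev P s H > c) :=
  ⟨one_sub_le_measure_of_ev_compl_le s H P,
    fun h => (ENNReal.lt_one_sub_self_of_lt_half hc).trans_le h,
    fun h => h.trans_le (measure_le_ev s H P hH)⟩

theorem stmt_18 {Θ : Type*} [MeasurableSpace Θ] (P : Measure Θ) [IsProbabilityMeasure P]
    (s : Θ → ℝ) (c : ENNReal) (hc0 : 0 < c) (hc : c < 1/2)
    (H : Set Θ) (hH : MeasurableSet H) :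
    (ev P s Hᶜ ≤ c → P H ≥ 1 - c) ∧
    (P H ≥ 1 - c → P H > c) ∧
    (P H > c → ev P s H > c) :=
  stmt_18_general P s c hc H hH
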